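/- The only simple cubic bipartite graphs of order ten are the Möbius ladder M₁₀ and the graph Q₁₀. Equivalently: a simple 3-regular bipartite graph G of order ten is isomorphic to Q₁₀ if its bipartite complement is disconnected, and isomorphic to M₁₀ if its bipartite complement is connected. -/

import Mathlib

namespace MinimalBraces

open SimpleGraph

/-- The degree of a vertex, via the cardinality of its neighbor set. -/
noncomputable def mdeg {V : Type*} (G : SimpleGraph V) (v : V) : ℕ :=
  (G.neighborSet v).ncard

/-- `G` has a perfect matching. -/
def HasPerfectMatching {V : Type*} (G : SimpleGraph V) : Prop :=
  ∃ M : G.Subgraph, M.IsPerfectMatching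

/-- A connected graph with at least one edge is matching covered if every edge
lies in some perfect matching. -/
def IsMatchingCovered {V : Type*} (G : SimpleGraph V) : Prop :=
  G.Connected ∧ G.edgeSet.Nonempty ∧
    ∀ e ∈ G.edgeSet, ∃ M : G.Subgraph, M.IsPerfectMatching ∧ e ∈ M.edgeSet

/-- `A`, `B` are the color classes of a bipartition of `G`. -/
def IsBipartition {V : Type*} (G : SimpleGraph V) (A B : Set V) : Prop :=
  A ∪ B = Set.univ ∧ A ∩ B = ∅ ∧
    ∀ u v : V, G.Adj u v → (u ∈ A ∧ v ∈ B) ∨ (u ∈ B ∧ v ∈ A)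

/-- `G` is bipartite (admits a bipartition into two color classes). -/
def IsBipartite' {V : Type*} (G : SimpleGraph V) : Prop :=
  ∃ A B : Set V, IsBipartition G A B

/-- The cut `∂(X)`: the set of edges of `G` with exactly one end in `X`. -/
def cutEdges {V : Type*} (G : SimpleGraph V) (X : Set V) : Set (Sym2 V) :=
  {e | e ∈ G.edgeSet ∧ ∃ u v : V, e = s(u, v) ∧ u ∈ X ∧ v ∉ X}

/-- The cut `∂(X)` is tight: every perfect matching has exactly one edge in it. -/
def IsTightCut {V : Type*} (G : SimpleGraph V) (X : Set V) : Prop :=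
  ∀ M : G.Subgraph, M.IsPerfectMatching → (M.edgeSet ∩ cutEdges G X).ncard = 1

/-- A shore is trivial if it or its complement is a singleton. -/
def IsTrivialShore {V : Type*} (X : Set V) : Prop :=
  (∃ v, X = ({v} : Set V)) ∨ (∃ v, Xᶜ = ({v} : Set V))

/-- A brace: a bipartite matching covered graph free of nontrivial tight cuts. -/
def IsBrace {V : Type*} (G : SimpleGraph V) : Prop :=
  IsBipartite' G ∧ IsMatchingCovered G ∧ ∀ X : Set V, IsTightCut G X → IsTrivialShore X

/-- A minimal brace: deleting any edge results in a graph that is not a brace. -/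
def IsMinimalBrace {V : Type*} (G : SimpleGraph V) : Prop :=
  IsBrace G ∧ ∀ e ∈ G.edgeSet, ¬ IsBrace (G.deleteEdges {e})

/-- The neighborhood of a set of vertices. -/
def setNbhd {V : Type*} (G : SimpleGraph V) (Z : Set V) : Set V :=
  {v | ∃ z ∈ Z, G.Adj z v}

/-- An edge of a (simple) brace is superfluous if deleting it leaves a brace. -/
def IsSuperfluous {V : Type*} (G : SimpleGraph V) (e : Sym2 V) : Prop :=
  e ∈ G.edgeSet ∧ IsBrace (G.deleteEdges {e})

/-- A set of edges of `G` forming a matching. -/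
def IsMatchingSet {V : Type*} (G : SimpleGraph V) (M : Set (Sym2 V)) : Prop :=
  M ⊆ G.edgeSet ∧ ∀ e₁ ∈ M, ∀ e₂ ∈ M, e₁ ≠ e₂ → ∀ v : V, ¬ (v ∈ e₁ ∧ v ∈ e₂)

/-- `G` is 2-extendable: it has a matching of size two, and every matching of
size two extends to a perfect matching. -/
def IsTwoExtendable {V : Type*} (G : SimpleGraph V) : Prop :=
  (∃ M : Set (Sym2 V), IsMatchingSet G M ∧ M.ncard = 2) ∧
  ∀ M : Set (Sym2 V), IsMatchingSet G M → M.ncard = 2 →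
    ∃ N : G.Subgraph, N.IsPerfectMatching ∧ M ⊆ N.edgeSet

/-- `G` is 3-connected: more than three vertices, and removing any at most two
vertices leaves a connected graph. -/
def IsThreeConnected {V : Type*} [Fintype V] (G : SimpleGraph V) : Prop :=
  4 ≤ Fintype.card V ∧ ∀ S : Set V, S.ncard ≤ 2 → (G.induce Sᶜ).Connected

/-! ### Retracts (bicontraction of all degree-two vertices) -/

/-- `f : V → W` realizes `H` as the retract of `G`: the fibers of `f` are exactly
the closed neighborhoods of the degree-two vertices of `G` (and singletons
otherwise), and adjacency in `H` is induced by `G`. -/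
def IsRetractMap {V W : Type*} (G : SimpleGraph V) (H : SimpleGraph W) (f : V → W) : Prop :=
  Function.Surjective f ∧
  (∀ u v : V, f u = f v ↔ (u = v ∨ ∃ v₀ : V, mdeg G v₀ = 2 ∧
      u ∈ insert v₀ (G.neighborSet v₀) ∧ v ∈ insert v₀ (G.neighborSet v₀))) ∧
  (∀ x y : W, H.Adj x y ↔ (x ≠ y ∧ ∃ u v : V, G.Adj u v ∧ f u = x ∧ f v = y))

/-- The retract obtained via `f` is a simple graph, i.e. no two distinct edges of `G`
become parallel after the bicontractions. -/
def RetractMapSimple {V W : Type*} (G : SimpleGraph V) (f : V → W) : Prop :=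
  ∀ e₁ ∈ G.edgeSet, ∀ e₂ ∈ G.edgeSet,
    Sym2.map f e₁ = Sym2.map f e₂ → ¬ (Sym2.map f e₁).IsDiag → e₁ = e₂

/-- An edge `e` of a brace `G` is thin if the retract of `G − e` is also a brace. -/
def IsThinEdge {V : Type*} (G : SimpleGraph V) (e : Sym2 V) : Prop :=
  e ∈ G.edgeSet ∧ ∃ (sH : Set V) (H : SimpleGraph sH) (f : V → sH),
    IsRetractMap (G.deleteEdges {e}) H f ∧ IsBrace H

/-- `e` is a strictly thin edge of `G`, with retract `H` realized by the map `f`: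
the retract of `G − e` is a brace and is simple. -/
def IsStrictlyThinVia {V W : Type*} (G : SimpleGraph V) (e : Sym2 V)
    (H : SimpleGraph W) (f : V → W) : Prop :=
  e ∈ G.edgeSet ∧ IsRetractMap (G.deleteEdges {e}) H f ∧ IsBrace H ∧
    RetractMapSimple (G.deleteEdges {e}) f

/-- `e` is a strictly thin edge of the simple brace `G`. -/
def IsStrictlyThinEdge {V : Type*} (G : SimpleGraph V) (e : Sym2 V) : Prop :=
  ∃ (sH : Set V) (H : SimpleGraph sH) (f : V → sH), IsStrictlyThinVia G e H f

/-- The index of a (strictly thin) edge `e`, computed from `G' = G − e`: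
the number of vertices of degree two in `G'`. -/
noncomputable def thinIndex {V : Type*} (G' : SimpleGraph V) : ℕ :=
  {v : V | mdeg G' v = 2}.ncard

/-- An inner vertex of `G' = G − e`: a vertex of degree two. -/
def IsInnerVertex {V : Type*} (G' : SimpleGraph V) (v : V) : Prop := mdeg G' v = 2

/-- An outer vertex of `G' = G − e`: a neighbor of an inner vertex. -/
def IsOuterVertex {V : Type*} (G' : SimpleGraph V) (v : V) : Prop :=
  ∃ u : V, IsInnerVertex G' u ∧ G'.Adj u v

/-- `(e, F)` is a minimality-preserving pair of the minimal brace `G`, where the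
retract `H` of `G − e` is realized by `f`: the edge `e` is strictly thin and
`H − F` is a minimal brace. -/
def IsMPPVia {V W : Type*} (G : SimpleGraph V) (H : SimpleGraph W) (f : V → W)
    (e : Sym2 V) (F : Set (Sym2 W)) : Prop :=
  IsMinimalBrace G ∧ IsStrictlyThinVia G e H f ∧ F ⊆ H.edgeSet ∧
    IsMinimalBrace (H.deleteEdges F)

/-! ### Stable extensions -/

/-- The `S`-extension of `J` with respect to `S = {a₁, a₂, b₁, b₂}`:
two new vertices `a₀ = inr 0` and `b₀ = inr 1` and five new edges
`a₀b₁, a₀b₂, b₀a₁, b₀a₂, a₀b₀`. -/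
def stableExtGraph {U : Type*} (J : SimpleGraph U) (a₁ a₂ b₁ b₂ : U) :
    SimpleGraph (U ⊕ Fin 2) :=
  SimpleGraph.fromRel (fun x y =>
    match x, y with
    | Sum.inl u, Sum.inl v => J.Adj u v
    | Sum.inl u, Sum.inr k => (k = 0 ∧ (u = b₁ ∨ u = b₂)) ∨ (k = 1 ∧ (u = a₁ ∨ u = a₂))
    | Sum.inr j, Sum.inr k => j ≠ k
    | Sum.inr _, Sum.inl _ => False)

/-- `G` is (isomorphic to) a stable-extension of the connected bipartite graph `J`,
with respect to some stable set meeting each color class in exactly two vertices. -/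
def IsStableExtensionOf {V U : Type*} (G : SimpleGraph V) (J : SimpleGraph U) : Prop :=
  ∃ (A B : Set U) (a₁ a₂ b₁ b₂ : U), J.Connected ∧ IsBipartition J A B ∧
    a₁ ∈ A ∧ a₂ ∈ A ∧ b₁ ∈ B ∧ b₂ ∈ B ∧ a₁ ≠ a₂ ∧ b₁ ≠ b₂ ∧
    ¬ J.Adj a₁ b₁ ∧ ¬ J.Adj a₁ b₂ ∧ ¬ J.Adj a₂ b₁ ∧ ¬ J.Adj a₂ b₂ ∧
    Nonempty (G ≃g stableExtGraph J a₁ a₂ b₁ b₂)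

/-! ### Concrete families of graphs -/

/-- The complete graph on two vertices. -/
def K2graph : SimpleGraph (Fin 2) := ⊤

/-- The cycle graph `Cₙ` on `ZMod n`. -/
def cycleGraph (n : ℕ) : SimpleGraph (ZMod n) :=
  SimpleGraph.fromRel (fun x y => x - y = 1)

/-- The Möbius ladder `M_{2m}`: the cycle `C_{2m}` plus the long chords. -/
def mobiusLadder (m : ℕ) : SimpleGraph (ZMod (2 * m)) :=
  SimpleGraph.fromRel (fun x y => x - y = 1 ∨ x - y = (m : ZMod (2 * m)))

/-- The prism (ladder) over the cycle `Cₘ`. -/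
def prismGraph (m : ℕ) : SimpleGraph (ZMod m × Bool) :=
  SimpleGraph.fromRel (fun p q => (p.2 = q.2 ∧ p.1 - q.1 = 1) ∨ (p.1 = q.1 ∧ p.2 ≠ q.2))

/-- The biwheel `B_{2m+2}`: the cycle `C_{2m}` plus two nonadjacent hubs, one joined to
all even rim vertices, the other to all odd rim vertices. `B_{2n} = biwheel (n-1)`. -/
def biwheel (m : ℕ) : SimpleGraph (ZMod (2 * m) ⊕ Fin 2) :=
  SimpleGraph.fromRel (fun x y =>
    match x, y with
    | Sum.inl a, Sum.inl b => a - b = 1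
    | Sum.inl a, Sum.inr k => (k = 0 ∧ Even a) ∨ (k = 1 ∧ ¬ Even a)
    | Sum.inr _, _ => False)

/-- The complete bipartite graph `K_{3,3}`. -/
def K33graph : SimpleGraph (Fin 3 ⊕ Fin 3) := completeBipartiteGraph (Fin 3) (Fin 3)

/-- The family `𝒢` : `K₂`, `C₄` and the McCuaig braces
(prisms, Möbius ladders and biwheels). -/
def InMcCuaigFamily {V : Type*} (G : SimpleGraph V) : Prop :=
  Nonempty (G ≃g K2graph) ∨ Nonempty (G ≃g cycleGraph 4) ∨
  (∃ m : ℕ, 3 ≤ m ∧ Nonempty (G ≃g prismGraph m)) ∨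
  (∃ m : ℕ, 3 ≤ m ∧ Nonempty (G ≃g mobiusLadder m)) ∨
  (∃ m : ℕ, 3 ≤ m ∧ Nonempty (G ≃g biwheel m))

/-- The graph `Q_{2n}` (for `n ≥ 5`): color classes `{0, …, n-1}` on each side; the
hubs `0, 1` of each side are joined to all vertices `2, …, n-1` of the other side,
and the vertices `2, …, n-1` form a perfect matching between the two sides.
`Qgraph 5 = Q₁₀`, `Qgraph 6 = Q₁₂`, and `Qgraph n = Q_{2n}` of the family `𝒬` for `n ≥ 6`. -/
def Qgraph (n : ℕ) : SimpleGraph (Fin n ⊕ Fin n) :=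
  SimpleGraph.fromRel (fun x y =>
    match x, y with
    | Sum.inl i, Sum.inr j =>
        ((i : ℕ) < 2 ∧ 2 ≤ (j : ℕ)) ∨ ((j : ℕ) < 2 ∧ 2 ≤ (i : ℕ)) ∨
          ((i : ℕ) = (j : ℕ) ∧ 2 ≤ (i : ℕ))
    | _, _ => False)

/-- `Q₁₀⁺`: the graph `Q₁₀` plus an edge joining two noncubic vertices that lie in
distinct color classes (and in distinct `K_{3,3}`-pieces of the tight cut
decomposition of `Q₁₀`). -/
def Q10plus : SimpleGraph (Fin 5 ⊕ Fin 5) :=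
  Qgraph 5 ⊔ SimpleGraph.fromEdgeSet {s((Sum.inl 0 : Fin 5 ⊕ Fin 5), (Sum.inr 0 : Fin 5 ⊕ Fin 5))}

/-- The bipartite complement of `G` with respect to the color classes `A`, `B`. -/
def bipComplement {V : Type*} (G : SimpleGraph V) (A B : Set V) : SimpleGraph V :=
  SimpleGraph.fromRel (fun u v => u ∈ A ∧ v ∈ B ∧ ¬ G.Adj u v)

/-! ### Bi-splitting and expansion operations -/

/-- `G` is obtained from `H` by bi-splitting the noncubic vertex `b` into `b₁ a₀ b₂`,
as witnessed by the projection `f : W → V` (which sends `b₁, a₀, b₂` to `b` and is a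
bijection elsewhere). The edges of `H` at `b` are distributed between `b₁` and `b₂`,
each receiving at least two, and `a₀` is a new vertex adjacent precisely to `b₁, b₂`. -/
def IsBisplitMap {V W : Type*} (H : SimpleGraph V) (b : V) (G : SimpleGraph W)
    (b₁ a₀ b₂ : W) (f : W → V) : Prop :=
  4 ≤ mdeg H b ∧
  Function.Surjective f ∧ f b₁ = b ∧ f a₀ = b ∧ f b₂ = b ∧
  b₁ ≠ b₂ ∧ a₀ ≠ b₁ ∧ a₀ ≠ b₂ ∧
  (∀ u v : W, f u = f v → u = v ∨
      (u ∈ ({b₁, a₀, b₂} : Set W) ∧ v ∈ ({b₁, a₀, b₂} : Set W))) ∧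
  G.neighborSet a₀ = {b₁, b₂} ∧
  3 ≤ mdeg G b₁ ∧ 3 ≤ mdeg G b₂ ∧ ¬ G.Adj b₁ b₂ ∧
  (∀ x : W, x ≠ a₀ → ¬ (G.Adj b₁ x ∧ G.Adj b₂ x)) ∧
  (∀ x y : V, H.Adj x y ↔ (x ≠ y ∧ ∃ u v : W, G.Adj u v ∧ f u = x ∧ f v = y))

/-- Expansion of index zero: adding an edge joining two nonadjacent vertices in
distinct color classes. -/
def ExpansionZero {W V : Type*} (G : SimpleGraph W) (H : SimpleGraph V) : Prop :=
  ∃ (A B : Set V) (a b : V), IsBipartition H A B ∧ a ∈ A ∧ b ∈ B ∧ ¬ H.Adj a b ∧ a ≠ b ∧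
    Nonempty (G ≃g (H ⊔ SimpleGraph.fromEdgeSet {s(a, b)}))

/-- Expansion of index one: `G = H{a → a₁b₀a₂} + b₀w`, where `a, w` are in the same
color class of `H` and `a` is noncubic. -/
def ExpansionOne {W V : Type*} (G : SimpleGraph W) (H : SimpleGraph V) : Prop :=
  ∃ (A B : Set V) (a w : V), IsBipartition H A B ∧
    ((a ∈ A ∧ w ∈ A) ∨ (a ∈ B ∧ w ∈ B)) ∧ a ≠ w ∧ 4 ≤ mdeg H a ∧
    ∃ (G₁ : SimpleGraph W) (a₁ b₀ a₂ : W) (f : W → V) (w' : W),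
      IsBisplitMap H a G₁ a₁ b₀ a₂ f ∧ f w' = w ∧
      G = G₁ ⊔ SimpleGraph.fromEdgeSet {s(b₀, w')}

/-- Expansion of index two: `G = H{a → a₁b₀a₂}{b → b₁a₀b₂} + a₀b₀`, where `a, b` are
noncubic vertices of `H` in distinct color classes. -/
def ExpansionTwo {W V : Type*} (G : SimpleGraph W) (H : SimpleGraph V) : Prop :=
  ∃ (A B : Set V) (a b : V), IsBipartition H A B ∧ a ∈ A ∧ b ∈ B ∧
    4 ≤ mdeg H a ∧ 4 ≤ mdeg H b ∧
    ∃ (sm : Set W) (G₁ : SimpleGraph sm) (a₁ b₀ a₂ : sm) (g : sm → V),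
      IsBisplitMap H a G₁ a₁ b₀ a₂ g ∧
      ∃ (b' : sm) (G₂ : SimpleGraph W) (b₁ a₀ b₂ : W) (f : W → sm) (b₀' : W),
        g b' = b ∧ IsBisplitMap G₁ b' G₂ b₁ a₀ b₂ f ∧ f b₀' = b₀ ∧
        G = G₂ ⊔ SimpleGraph.fromEdgeSet {s(a₀, b₀')}

/-- `G` is obtained from `H` by an expansion operation (of index zero, one or two). -/
def IsExpansionOf {W V : Type*} (G : SimpleGraph W) (H : SimpleGraph V) : Prop :=
  ExpansionZero G H ∨ ExpansionOne G H ∨ ExpansionTwo G H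

/-! ### Narrow minimality-preserving pairs -/

/-- The properties of `F` (viewed in `G − e` via the retract map `fm`) required by the
Main Theorem: (i) if `index(e) = 1` then some outer vertex `v` has `F ⊆ ∂(v)`;
(ii) if `index(e) = 2` then some adjacent outer vertices `u, w` have `F ⊆ ∂({u,w})`;
(iii) for each `f ∈ F`, an end of `f` is cubic iff it is an outer vertex. -/
def NarrowProps {V W : Type*} (G : SimpleGraph V) (fm : V → W) (e : Sym2 V)
    (F : Set (Sym2 W)) : Prop :=
  (thinIndex (G.deleteEdges {e}) = 1 →
      ∃ v : V, IsOuterVertex (G.deleteEdges {e}) v ∧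
        ∀ g ∈ (G.deleteEdges {e}).edgeSet, Sym2.map fm g ∈ F → v ∈ g) ∧
  (thinIndex (G.deleteEdges {e}) = 2 →
      ∃ u w : V, IsOuterVertex (G.deleteEdges {e}) u ∧ IsOuterVertex (G.deleteEdges {e}) w ∧
        (G.deleteEdges {e}).Adj u w ∧
        ∀ g ∈ (G.deleteEdges {e}).edgeSet, Sym2.map fm g ∈ F →
          ((u ∈ g ∧ w ∉ g) ∨ (w ∈ g ∧ u ∉ g))) ∧
  (∀ g ∈ (G.deleteEdges {e}).edgeSet, Sym2.map fm g ∈ F →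
      ∀ x : V, x ∈ g → (mdeg G x = 3 ↔ IsOuterVertex (G.deleteEdges {e}) x))

/-- A narrow minimality-preserving pair, as in the Main Theorem. -/
def IsNarrowMPP {V W : Type*} (G : SimpleGraph V) (H : SimpleGraph W) (fm : V → W)
    (e : Sym2 V) (F : Set (Sym2 W)) : Prop :=
  IsMPPVia G H fm e F ∧
  (F = ∅ ∨ NarrowProps G fm e F) ∧
  F.ncard ≤ thinIndex (G.deleteEdges {e}) + 1 ∧
  (thinIndex (G.deleteEdges {e}) = 1 ∧ F.ncard = 2 →
    IsStableExtensionOf G (H.deleteEdges F))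

/-!
Let `H` be the bipartite complement of `G`. Both colour classes have five vertices, so `H` is
2-regular, and each component of `H` is an even cycle meeting both classes in at least two
vertices: `H` is a 4-cycle plus a 6-cycle, or a 10-cycle. A 2-regular bipartite graph on `3 + 3`
vertices is `K₃,₃` minus a perfect matching, so in the first case `H`, and with it `G`, is
determined up to isomorphism: `G ≅ Q₁₀`. In the second case `H ≅ C₁₀` and `G ≅ M₁₀`, whose
bipartite complement joins `x` to `x ± 3`.
-/

open Function

theorem injective_of_nodup_five {α : Type*} {x₀ x₁ x₂ x₃ x₄ : α}
    (h : [x₀, x₁, x₂, x₃, x₄].Nodup) : Injective ![x₀, x₁, x₂, x₃, x₄] := by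
  have : ![x₀, x₁, x₂, x₃, x₄] = [x₀, x₁, x₂, x₃, x₄].get := by funext i; fin_cases i <;> rfl
  exact this ▸ List.nodup_iff_injective_get.mp h

section Bipartition

variable {V : Type*} {G : SimpleGraph V} {A B : Set V} {a a' b : V}

theorem IsBipartition.isBipartiteWith (h : IsBipartition G A B) : G.IsBipartiteWith A B where
  disjoint := Set.disjoint_iff_inter_eq_empty.mpr h.2.1
  mem_of_adj _ _ hadj := h.2.2 _ _ hadj

theorem IsBipartition.symm (h : IsBipartition G A B) : IsBipartition G B A :=
  ⟨by rw [Set.union_comm, h.1], by rw [Set.inter_comm, h.2.1],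
    fun u v huv => (h.2.2 u v huv).symm⟩

theorem IsBipartition.notMem_right (h : IsBipartition G A B) (ha : a ∈ A) : a ∉ B :=
  Set.disjoint_left.mp h.isBipartiteWith.disjoint ha

theorem IsBipartition.mem_right_of_adj (h : IsBipartition G A B) (ha : a ∈ A) (hab : G.Adj a b) :
    b ∈ B :=
  h.isBipartiteWith.mem_of_mem_adj ha hab

theorem IsBipartition.not_adj_of_mem_left (h : IsBipartition G A B) (ha : a ∈ A) (ha' : a' ∈ A) :
    ¬ G.Adj a a' :=
  fun hadj => h.notMem_right ha' (h.mem_right_of_adj ha hadj)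

theorem IsBipartition.ncard_add_ncard [Finite V] (h : IsBipartition G A B) :
    A.ncard + B.ncard = Nat.card V := by
  rw [← Set.ncard_union_eq h.isBipartiteWith.disjoint, h.1, Set.ncard_univ]

theorem IsBipartition.ncard_eq_ncard_of_regular [Finite V] {d : ℕ} (h : IsBipartition G A B)
    (hd : ∀ v, mdeg G v = d) (hd0 : d ≠ 0) : A.ncard = B.ncard := by
  classical
  have := Fintype.ofFinite V
  have hdeg : ∀ v, G.degree v = d := fun v => by
    rw [← hd v, mdeg, Set.ncard_eq_toFinset_card', ← neighborFinset_def,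
      card_neighborFinset_eq_degree]
  have hsum := isBipartiteWith_sum_degrees_eq (s := A.toFinset) (t := B.toFinset)
    (by simpa using h.isBipartiteWith)
  simp only [hdeg, Finset.sum_const, smul_eq_mul] at hsum
  rw [Set.ncard_eq_toFinset_card' A, Set.ncard_eq_toFinset_card' B]
  exact Nat.eq_of_mul_eq_mul_right (Nat.pos_of_ne_zero hd0) hsum

theorem bipComplement_comm : bipComplement G A B = bipComplement G B A := by
  ext u v
  simp only [bipComplement, fromRel_adj, G.adj_comm]
  tauto

theorem IsBipartition.bipComplement_adj (h : IsBipartition G A B) (ha : a ∈ A) (hb : b ∈ B) :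
    (bipComplement G A B).Adj a b ↔ ¬ G.Adj a b := by
  simp only [bipComplement, fromRel_adj, ha, hb, h.notMem_right ha, true_and, false_and, and_false,
    or_false]
  exact and_iff_right fun hab => h.notMem_right ha (hab ▸ hb)

theorem isBipartition_bipComplement (h : IsBipartition G A B) :
    IsBipartition (bipComplement G A B) A B := by
  refine ⟨h.1, h.2.1, fun u v huv => ?_⟩
  simp only [bipComplement, fromRel_adj] at huv
  tauto

theorem IsBipartition.neighborSet_bipComplement (h : IsBipartition G A B) (ha : a ∈ A) :
    (bipComplement G A B).neighborSet a = B \ G.neighborSet a := by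
  ext x
  constructor
  · intro hx
    have hxB := (isBipartition_bipComplement h).mem_right_of_adj ha hx
    exact ⟨hxB, (h.bipComplement_adj ha hxB).mp hx⟩
  · rintro ⟨hxB, hx⟩
    exact (h.bipComplement_adj ha hxB).mpr hx

theorem IsBipartition.mdeg_bipComplement [Finite V] (h : IsBipartition G A B) (ha : a ∈ A) :
    mdeg (bipComplement G A B) a = B.ncard - mdeg G a := by
  rw [mdeg, h.neighborSet_bipComplement ha, Set.ncard_sdiff
    (isBipartiteWith_neighborSet_subset h.isBipartiteWith ha), mdeg]

end Bipartition

section TwoRegular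

variable {V : Type*} {H : SimpleGraph V} {A B S T : Set V} {u v w x y z p q : V}

theorem exists_neighborSet_eq_pair (hv : mdeg H v = 2) (hu : H.Adj v u) :
    ∃ w, u ≠ w ∧ H.neighborSet v = {u, w} := by
  obtain ⟨x, y, hxy, hN⟩ := Set.ncard_eq_two.mp hv
  have hu' : u ∈ H.neighborSet v := hu
  rw [hN, Set.mem_insert_iff, Set.mem_singleton_iff] at hu'
  rcases hu' with rfl | rfl
  · exact ⟨y, hxy, hN⟩
  · exact ⟨x, hxy.symm, hN.trans (Set.pair_comm _ _)⟩

theorem adj_of_neighborSet_eq_pair (hN : H.neighborSet v = {u, w}) : H.Adj v u ∧ H.Adj v w := by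
  simp [← mem_neighborSet, hN]

theorem eq_or_eq_of_neighborSet_eq_pair (hN : H.neighborSet v = {u, w}) (hx : H.Adj v x) :
    x = u ∨ x = w := by
  have hx' : x ∈ H.neighborSet v := hx
  rwa [hN, Set.mem_insert_iff, Set.mem_singleton_iff] at hx'

theorem ne_of_neighborSet_eq_pair (hN : H.neighborSet x = {p, q}) (hyz : H.Adj y z)
    (hp : z ≠ p) (hq : z ≠ q) : y ≠ x := by
  rintro rfl
  rcases eq_or_eq_of_neighborSet_eq_pair hN hyz with h | h
  exacts [hp h, hq h]

theorem not_reachable_of_closed (hS : ∀ x ∈ S, H.neighborSet x ⊆ S) (hu : u ∈ S) (hv : v ∉ S) :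
    ¬ H.Reachable u v := by
  rintro ⟨W⟩
  induction W with
  | nil => exact hv hu
  | cons h _ ih => exact ih (hS _ hu h) hv

variable [Finite V]

theorem neighborSet_eq_of_subset_of_ncard_le (hv : mdeg H v = 2) (hT : H.neighborSet v ⊆ T)
    (hT2 : T.ncard ≤ 2) : H.neighborSet v = T :=
  Set.eq_of_subset_of_ncard_le hT (hT2.trans_eq hv.symm)

theorem neighborSet_eq_pair (hv : mdeg H v = 2) (hu : H.Adj v u) (hw : H.Adj v w) (huw : u ≠ w) :
    H.neighborSet v = {u, w} :=
  (Set.eq_of_subset_of_ncard_le (Set.pair_subset hu hw)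
    (by rw [Set.ncard_pair huw]; exact hv.le)).symm

theorem exists_neighborSet_eq_sdiff_singleton (hv : mdeg H v = 2) (hT : H.neighborSet v ⊆ T)
    (hT3 : T.ncard = 3) : ∃ m ∈ T, H.neighborSet v = T \ {m} := by
  obtain ⟨m, hmT, hm⟩ := Set.exists_mem_notMem_of_ncard_lt_ncard (s := H.neighborSet v) (t := T)
    (by rw [hT3]; exact hv.trans_lt (by norm_num))
  refine ⟨m, hmT, neighborSet_eq_of_subset_of_ncard_le hv (fun x hx => ⟨hT hx, ?_⟩) ?_⟩
  · rintro rfl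
    exact hm hx
  · rw [Set.ncard_sdiff_singleton_of_mem hmT, hT3]

theorem ncard_sdiff_triple (hx : x ∈ B) (hy : y ∈ B) (hz : z ∈ B) (hxy : x ≠ y) (hxz : x ≠ z)
    (hyz : y ≠ z) : (B \ {x, y, z}).ncard = B.ncard - 3 := by
  rw [Set.ncard_sdiff (by simp [Set.insert_subset_iff, hx, hy, hz]),
    Set.ncard_eq_three.mpr ⟨x, y, z, hxy, hxz, hyz, rfl⟩]

theorem IsBipartition.neighborSet_eq_sdiff_of_closed {SA SB : Set V} (hbip : IsBipartition H A B)
    (hv : mdeg H v = 2) (hvA : v ∈ A) (hvS : v ∉ SA) (hSB : ∀ b ∈ SB, H.neighborSet b ⊆ SA)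
    (hcard : (B \ SB).ncard ≤ 2) : H.neighborSet v = B \ SB :=
  neighborSet_eq_of_subset_of_ncard_le hv
    (fun x hx => ⟨hbip.mem_right_of_adj hvA hx, fun hxS => hvS (hSB x hxS hx.symm)⟩) hcard

theorem IsBipartition.exists_neighborSet_eq_sdiff_of_closed {SA SB : Set V}
    (hbip : IsBipartition H A B) (hH : ∀ v, mdeg H v = 2) (hA : SA.ncard < A.ncard)
    (hSB : ∀ b ∈ SB, H.neighborSet b ⊆ SA) (hB : (B \ SB).ncard ≤ 2) :
    ∃ a ∈ A, a ∉ SA ∧ H.neighborSet a = B \ SB := by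
  obtain ⟨a, ha, haS⟩ := Set.exists_mem_notMem_of_ncard_lt_ncard hA
  exact ⟨a, ha, haS, hbip.neighborSet_eq_sdiff_of_closed (hH a) ha haS hSB hB⟩

end TwoRegular

section Components

variable {V : Type*} {H : SimpleGraph V} {A B : Set V} {a₀ a₁ b₀ b₁ : V}

structure IsFourCycleComponent (H : SimpleGraph V) (A B : Set V) (a₀ a₁ b₀ b₁ : V) : Prop where
  mem_a₀ : a₀ ∈ A
  mem_a₁ : a₁ ∈ A
  mem_b₀ : b₀ ∈ B
  mem_b₁ : b₁ ∈ B
  a_ne : a₀ ≠ a₁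
  b_ne : b₀ ≠ b₁
  neighborSet_a₀ : H.neighborSet a₀ = {b₀, b₁}
  neighborSet_a₁ : H.neighborSet a₁ = {b₀, b₁}
  neighborSet_b₀ : H.neighborSet b₀ = {a₀, a₁}
  neighborSet_b₁ : H.neighborSet b₁ = {a₀, a₁}

theorem IsFourCycleComponent.not_connected [Finite V] (hC : IsFourCycleComponent H A B a₀ a₁ b₀ b₁)
    (hbip : IsBipartition H A B) (hA : 2 < A.ncard) : ¬ H.Connected := by
  obtain ⟨a, haA, ha⟩ := Set.exists_mem_notMem_of_ncard_lt_ncard (s := {a₀, a₁}) (t := A)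
    (by rwa [Set.ncard_pair hC.a_ne])
  have hclosed : ∀ x ∈ ({a₀, a₁, b₀, b₁} : Set V), H.neighborSet x ⊆ {a₀, a₁, b₀, b₁} := by
    rintro x (rfl | rfl | rfl | rfl) <;>
      simp [hC.neighborSet_a₀, hC.neighborSet_a₁, hC.neighborSet_b₀, hC.neighborSet_b₁,
        Set.insert_subset_iff]
  have haS : a ∉ ({a₀, a₁, b₀, b₁} : Set V) := by
    simp only [Set.mem_insert_iff, Set.mem_singleton_iff, not_or] at ha ⊢
    exact ⟨ha.1, ha.2, fun h => hbip.notMem_right haA (h ▸ hC.mem_b₀),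
      fun h => hbip.notMem_right haA (h ▸ hC.mem_b₁)⟩
  exact fun hconn => not_reachable_of_closed hclosed (by simp) haS (hconn.preconnected a₀ a)

theorem IsBipartition.exists_fourCycleComponent_of_closed [Finite V]
    (hbip : IsBipartition H A B) (hH : ∀ v, mdeg H v = 2) {SA SB : Set V}
    (hSA : ∀ a ∈ SA, H.neighborSet a ⊆ SB) (hSB : ∀ b ∈ SB, H.neighborSet b ⊆ SA)
    (hA : (A \ SA).ncard = 2) (hB : (B \ SB).ncard = 2) :
    ∃ a₀ a₁ b₀ b₁, IsFourCycleComponent H A B a₀ a₁ b₀ b₁ := by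
  obtain ⟨a₀, a₁, ha, hAeq⟩ := Set.ncard_eq_two.mp hA
  obtain ⟨b₀, b₁, hb, hBeq⟩ := Set.ncard_eq_two.mp hB
  have hNA : ∀ a ∈ A \ SA, H.neighborSet a = {b₀, b₁} := fun a ha =>
    hBeq ▸ hbip.neighborSet_eq_sdiff_of_closed (hH a) ha.1 ha.2 hSB hB.le
  have hNB : ∀ b ∈ B \ SB, H.neighborSet b = {a₀, a₁} := fun b hb =>
    hAeq ▸ hbip.symm.neighborSet_eq_sdiff_of_closed (hH b) hb.1 hb.2 hSA hA.le
  have ha₀ : a₀ ∈ A \ SA := by simp [hAeq]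
  have ha₁ : a₁ ∈ A \ SA := by simp [hAeq]
  have hb₀ : b₀ ∈ B \ SB := by simp [hBeq]
  have hb₁ : b₁ ∈ B \ SB := by simp [hBeq]
  exact ⟨a₀, a₁, b₀, b₁, ha₀.1, ha₁.1, hb₀.1, hb₁.1, ha, hb, hNA a₀ ha₀, hNA a₁ ha₁, hNB b₀ hb₀,
    hNB b₁ hb₁⟩

end Components

section Labelling

variable {V ι : Type*} {H : SimpleGraph V} {A B : Set V}

structure IsLabelling (H : SimpleGraph V) (A B : Set V) (σ τ : ι → ι) (a b : ι → V) : Prop where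
  injective_left : Injective a
  injective_right : Injective b
  mem_left : ∀ i, a i ∈ A
  mem_right : ∀ j, b j ∈ B
  neighborSet_eq : ∀ i, H.neighborSet (a i) = {b (σ i), b (τ i)}

variable {σ τ : ι → ι} {a b : ι → V}

theorem IsLabelling.adj_iff (hL : IsLabelling H A B σ τ a b) (i j : ι) :
    H.Adj (a i) (b j) ↔ j = σ i ∨ j = τ i := by
  rw [← mem_neighborSet, hL.neighborSet_eq, Set.mem_insert_iff, Set.mem_singleton_iff,
    hL.injective_right.eq_iff, hL.injective_right.eq_iff]

theorem IsLabelling.adj_iff_of_bipComplement {G : SimpleGraph V}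
    (hL : IsLabelling (bipComplement G A B) A B σ τ a b) (hbip : IsBipartition G A B) (i j : ι) :
    G.Adj (a i) (b j) ↔ ¬ (j = σ i ∨ j = τ i) := by
  rw [← hL.adj_iff, hbip.bipComplement_adj (hL.mem_left i) (hL.mem_right j), not_not]

theorem IsBipartition.nonempty_iso_of_labelling {α β : Type*} [Fintype V] [Fintype α] [Fintype β]
    {G : SimpleGraph V} (hbip : IsBipartition G A B)
    (hcard : Fintype.card V = Fintype.card α + Fintype.card β) {a : α → V} {b : β → V}
    (ha : Injective a) (hb : Injective b) (haA : ∀ i, a i ∈ A) (hbB : ∀ j, b j ∈ B)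
    {K : SimpleGraph (α ⊕ β)} (hKl : ∀ i i', ¬ K.Adj (.inl i) (.inl i'))
    (hKr : ∀ j j', ¬ K.Adj (.inr j) (.inr j'))
    (hK : ∀ i j, K.Adj (.inl i) (.inr j) ↔ G.Adj (a i) (b j)) :
    Nonempty (K ≃g G) := by
  have hinj : Injective (Sum.elim a b) :=
    ha.sumElim hb fun i j h => hbip.notMem_right (haA i) (h ▸ hbB j)
  have hbij : Bijective (Sum.elim a b) :=
    (Fintype.bijective_iff_injective_and_card _).2 ⟨hinj, by simp [hcard]⟩
  refine ⟨⟨Equiv.ofBijective _ hbij, ?_⟩⟩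
  rintro (i | j) (i' | j') <;> simp only [Equiv.ofBijective_apply, Sum.elim_inl, Sum.elim_inr]
  · exact iff_of_false (hbip.not_adj_of_mem_left (haA i) (haA i')) (hKl i i')
  · exact (hK i j').symm
  · rw [G.adj_comm, K.adj_comm]
    exact (hK i' j).symm
  · exact iff_of_false (hbip.symm.not_adj_of_mem_left (hbB j) (hbB j')) (hKr j j')

theorem IsBipartition.isLabelling_of_neighborSet_eq (hbip : IsBipartition H A B) {a b : Fin 5 → V}
    (ha : Injective a) (hb : Injective b) (ha₀ : a 0 ∈ A)
    (hN : ∀ i, H.neighborSet (a i) = {b i, b (i + 1)}) :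
    IsLabelling H A B (fun i => i) (· + 1) a b := by
  have hadj := fun i => adj_of_neighborSet_eq_pair (hN i)
  have hstep : ∀ i, a i ∈ A → a (i + 1) ∈ A := fun i hi =>
    hbip.symm.mem_right_of_adj (hbip.mem_right_of_adj hi (hadj i).2) (hadj (i + 1)).1.symm
  have hA : ∀ i, a i ∈ A := by
    intro i
    fin_cases i
    exacts [ha₀, hstep 0 ha₀, hstep 1 (hstep 0 ha₀), hstep 2 (hstep 1 (hstep 0 ha₀)),
      hstep 3 (hstep 2 (hstep 1 (hstep 0 ha₀)))]
  exact ⟨ha, hb, hA, fun j => hbip.mem_right_of_adj (hA j) (hadj j).1, hN⟩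

end Labelling

section QLabelling

variable {V : Type*} [Finite V] {H : SimpleGraph V} {A B : Set V} {a₀ a₁ b₀ b₁ : V}

theorem exists_neighborSet_eq_of_ncard_eq_three (hH : ∀ v, mdeg H v = 2) {A' B' : Set V}
    (hA' : A'.ncard = 3) (hB' : B'.ncard = 3) (hAB : ∀ a ∈ A', H.neighborSet a ⊆ B')
    (hBA : ∀ b ∈ B', H.neighborSet b ⊆ A') {a₂ a₃ a₄ : V} (ha₂ : a₂ ∈ A') (ha₃ : a₃ ∈ A')
    (ha₄ : a₄ ∈ A') (h₂₃ : a₂ ≠ a₃) (h₂₄ : a₂ ≠ a₄) (h₃₄ : a₃ ≠ a₄) :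
    ∃ b₂ ∈ B', ∃ b₃ ∈ B', ∃ b₄ ∈ B', b₂ ≠ b₃ ∧ b₂ ≠ b₄ ∧ b₃ ≠ b₄ ∧
      H.neighborSet a₂ = {b₃, b₄} ∧ H.neighborSet a₃ = {b₂, b₄} ∧ H.neighborSet a₄ = {b₂, b₃} := by
  have hadj : ∀ {a m b}, H.neighborSet a = B' \ {m} → b ∈ B' → b ≠ m → H.Adj a b :=
    fun hN hb hbm => by rw [← mem_neighborSet, hN]; exact ⟨hb, hbm⟩
  have hnadj : ∀ {a m}, H.neighborSet a = B' \ {m} → ¬ H.Adj m a := fun {a m} hN h => by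
    have h' : m ∈ H.neighborSet a := h.symm
    rw [hN] at h'
    exact h'.2 rfl
  -- a vertex of `B'` has two neighbours in `A'`, so it misses at most one vertex of `A'`
  have hmiss : ∀ m ∈ B', ∀ x ∈ A', ∀ y ∈ A', x ≠ y → ¬ H.Adj m x → ¬ H.Adj m y → False := by
    intro m hm x hx y hy hxy hmx hmy
    have hsub : H.neighborSet m ⊆ A' \ {x, y} := fun z hz =>
      ⟨hBA m hm hz, by rintro (rfl | rfl); exacts [hmx hz, hmy hz]⟩
    have := Set.ncard_le_ncard hsub
    rw [Set.ncard_sdiff (Set.pair_subset hx hy), hA', Set.ncard_pair hxy] at this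
    exact absurd (hH m) (by unfold mdeg; omega)
  obtain ⟨b₂, hb₂, hN₂⟩ := exists_neighborSet_eq_sdiff_singleton (hH a₂) (hAB a₂ ha₂) hB'
  obtain ⟨b₃, hb₃, hN₃⟩ := exists_neighborSet_eq_sdiff_singleton (hH a₃) (hAB a₃ ha₃) hB'
  obtain ⟨b₄, hb₄, hN₄⟩ := exists_neighborSet_eq_sdiff_singleton (hH a₄) (hAB a₄ ha₄) hB'
  have h₂₃' : b₂ ≠ b₃ := fun h => hmiss b₂ hb₂ a₂ ha₂ a₃ ha₃ h₂₃ (hnadj hN₂) (h ▸ hnadj hN₃)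
  have h₂₄' : b₂ ≠ b₄ := fun h => hmiss b₂ hb₂ a₂ ha₂ a₄ ha₄ h₂₄ (hnadj hN₂) (h ▸ hnadj hN₄)
  have h₃₄' : b₃ ≠ b₄ := fun h => hmiss b₃ hb₃ a₃ ha₃ a₄ ha₄ h₃₄ (hnadj hN₃) (h ▸ hnadj hN₄)
  exact ⟨b₂, hb₂, b₃, hb₃, b₄, hb₄, h₂₃', h₂₄', h₃₄',
    neighborSet_eq_pair (hH a₂) (hadj hN₂ hb₃ h₂₃'.symm) (hadj hN₂ hb₄ h₂₄'.symm) h₃₄',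
    neighborSet_eq_pair (hH a₃) (hadj hN₃ hb₂ h₂₃') (hadj hN₃ hb₄ h₃₄'.symm) h₂₄',
    neighborSet_eq_pair (hH a₄) (hadj hN₄ hb₂ h₂₄') (hadj hN₄ hb₃ h₃₄') h₂₃'⟩

/-- In the bipartite complement of `Qgraph 5`, `inl i` is adjacent to `inr (qNeighbor₁ i)` and
`inr (qNeighbor₂ i)`: a 4-cycle on the hubs `0, 1` and a 6-cycle on `2, 3, 4`. -/
def qNeighbor₁ : Fin 5 → Fin 5 := ![0, 0, 3, 2, 2]

def qNeighbor₂ : Fin 5 → Fin 5 := ![1, 1, 4, 4, 3]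

theorem IsFourCycleComponent.exists_isLabelling (hC : IsFourCycleComponent H A B a₀ a₁ b₀ b₁)
    (hbip : IsBipartition H A B) (hA : A.ncard = 5) (hB : B.ncard = 5) (hH : ∀ v, mdeg H v = 2) :
    ∃ a b, IsLabelling H A B qNeighbor₁ qNeighbor₂ a b := by
  have hA' : (A \ {a₀, a₁}).ncard = 3 := by
    rw [Set.ncard_sdiff (Set.pair_subset hC.mem_a₀ hC.mem_a₁), hA, Set.ncard_pair hC.a_ne]
  have hB' : (B \ {b₀, b₁}).ncard = 3 := by
    rw [Set.ncard_sdiff (Set.pair_subset hC.mem_b₀ hC.mem_b₁), hB, Set.ncard_pair hC.b_ne]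
  have hAB : ∀ a ∈ A \ {a₀, a₁}, H.neighborSet a ⊆ B \ {b₀, b₁} := by
    rintro a ⟨haA, ha⟩ x hx
    refine ⟨hbip.mem_right_of_adj haA hx, ?_⟩
    rintro (rfl | rfl)
    exacts [ha (hC.neighborSet_b₀ ▸ hx.symm), ha (hC.neighborSet_b₁ ▸ hx.symm)]
  have hBA : ∀ b ∈ B \ {b₀, b₁}, H.neighborSet b ⊆ A \ {a₀, a₁} := by
    rintro b ⟨hbB, hb⟩ x hx
    refine ⟨hbip.symm.mem_right_of_adj hbB hx, ?_⟩
    rintro (rfl | rfl)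
    exacts [hb (hC.neighborSet_a₀ ▸ hx.symm), hb (hC.neighborSet_a₁ ▸ hx.symm)]
  obtain ⟨a₂, a₃, a₄, h₂₃, h₂₄, h₃₄, hA'eq⟩ := Set.ncard_eq_three.mp hA'
  have ha₂ : a₂ ∈ A \ {a₀, a₁} := by simp [hA'eq]
  have ha₃ : a₃ ∈ A \ {a₀, a₁} := by simp [hA'eq]
  have ha₄ : a₄ ∈ A \ {a₀, a₁} := by simp [hA'eq]
  obtain ⟨b₂, hb₂, b₃, hb₃, b₄, hb₄, h₂₃', h₂₄', h₃₄', hN₂, hN₃, hN₄⟩ :=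
    exists_neighborSet_eq_of_ncard_eq_three hH hA' hB' hAB hBA ha₂ ha₃ ha₄ h₂₃ h₂₄ h₃₄
  simp only [Set.mem_sdiff, Set.mem_insert_iff, Set.mem_singleton_iff, not_or]
    at ha₂ ha₃ ha₄ hb₂ hb₃ hb₄
  have ha₀₁ := hC.a_ne
  have hb₀₁ := hC.b_ne
  refine ⟨![a₀, a₁, a₂, a₃, a₄], ![b₀, b₁, b₂, b₃, b₄],
    ⟨injective_of_nodup_five (by simp [*, Ne.symm]), injective_of_nodup_five (by simp [*, Ne.symm]),
      ?_, ?_, ?_⟩⟩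
  · simp [Fin.forall_fin_succ, hC.mem_a₀, hC.mem_a₁, *]
  · simp [Fin.forall_fin_succ, hC.mem_b₀, hC.mem_b₁, *]
  · simp [Fin.forall_fin_succ, qNeighbor₁, qNeighbor₂, hC.neighborSet_a₀, hC.neighborSet_a₁, *]

end QLabelling

section Trace

variable {V : Type*} [Finite V] {H : SimpleGraph V} {A B : Set V} {a₀ a₁ a₂ a₃ b₀ b₁ b₂ b₃ b₄ : V}

theorem IsBipartition.exists_fourCycleComponent_of_sixCycle (hbip : IsBipartition H A B)
    (hA : A.ncard = 5) (hB : B.ncard = 5) (hH : ∀ v, mdeg H v = 2) (ha₀ : a₀ ∈ A)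
    (ha : [a₀, a₁, a₂].Nodup) (hb : [b₀, b₁, b₂].Nodup) (hN₀ : H.neighborSet a₀ = {b₀, b₁})
    (hN₁ : H.neighborSet a₁ = {b₁, b₂}) (hN₂ : H.neighborSet a₂ = {b₂, b₀}) :
    ∃ a₀ a₁ b₀ b₁, IsFourCycleComponent H A B a₀ a₁ b₀ b₁ := by
  simp only [List.nodup_cons, List.mem_cons, List.not_mem_nil, not_or, not_false_eq_true, and_true,
    List.nodup_nil] at ha hb
  obtain ⟨⟨ha₀₁, ha₀₂⟩, ha₁₂⟩ := ha
  obtain ⟨⟨hb₀₁, hb₀₂⟩, hb₁₂⟩ := hb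
  have adj := @adj_of_neighborSet_eq_pair V H
  have hb₁ := hbip.mem_right_of_adj ha₀ (adj hN₀).2
  have ha₁ := hbip.symm.mem_right_of_adj hb₁ (adj hN₁).1.symm
  have hb₂ := hbip.mem_right_of_adj ha₁ (adj hN₁).2
  have ha₂ := hbip.symm.mem_right_of_adj hb₂ (adj hN₂).1.symm
  have hM₀ := neighborSet_eq_pair (hH b₀) (adj hN₀).1.symm (adj hN₂).2.symm ha₀₂
  have hM₁ := neighborSet_eq_pair (hH b₁) (adj hN₀).2.symm (adj hN₁).1.symm ha₀₁
  have hM₂ := neighborSet_eq_pair (hH b₂) (adj hN₁).2.symm (adj hN₂).1.symm ha₁₂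
  refine hbip.exists_fourCycleComponent_of_closed hH (SA := {a₀, a₁, a₂}) (SB := {b₀, b₁, b₂})
    ?_ ?_ ?_ ?_
  · rintro a (rfl | rfl | rfl) <;> simp [hN₀, hN₁, hN₂, Set.insert_subset_iff]
  · rintro b (rfl | rfl | rfl) <;> simp [hM₀, hM₁, hM₂, Set.insert_subset_iff]
  · rw [ncard_sdiff_triple ha₀ ha₁ ha₂ ha₀₁ ha₀₂ ha₁₂, hA]
  · rw [ncard_sdiff_triple (hbip.mem_right_of_adj ha₀ (adj hN₀).1) hb₁ hb₂ hb₀₁ hb₀₂ hb₁₂, hB]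

/-- The last vertex `a₄` of `A` has no neighbour among the saturated `b₁, b₂, b₃`, so it is
adjacent to `b₀` and `b₄`; and `b₄ ≠ b₀`, as otherwise `b₀` would have the three neighbours
`a₀, a₃, a₄`. -/
theorem IsBipartition.exists_isLabelling_of_path (hbip : IsBipartition H A B) (hA : A.ncard = 5)
    (hB : B.ncard = 5) (hH : ∀ v, mdeg H v = 2) (ha₀ : a₀ ∈ A) (ha : [a₀, a₁, a₂, a₃].Nodup)
    (hb : [b₀, b₁, b₂, b₃].Nodup) (hb₄ : [b₁, b₂, b₃, b₄].Nodup)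
    (hN₀ : H.neighborSet a₀ = {b₀, b₁}) (hN₁ : H.neighborSet a₁ = {b₁, b₂})
    (hN₂ : H.neighborSet a₂ = {b₂, b₃}) (hN₃ : H.neighborSet a₃ = {b₃, b₄}) :
    ∃ a b : Fin 5 → V, IsLabelling H A B (fun i => i) (· + 1) a b := by
  simp only [List.nodup_cons, List.mem_cons, List.not_mem_nil, not_or, not_false_eq_true, and_true,
    List.nodup_nil] at ha hb hb₄
  obtain ⟨⟨ha₀₁, ha₀₂, ha₀₃⟩, ⟨ha₁₂, ha₁₃⟩, ha₂₃⟩ := ha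
  obtain ⟨⟨hb₀₁, hb₀₂, hb₀₃⟩, ⟨hb₁₂, hb₁₃⟩, hb₂₃⟩ := hb
  obtain ⟨⟨-, -, hb₁₄⟩, ⟨-, hb₂₄⟩, hb₃₄⟩ := hb₄
  have adj := @adj_of_neighborSet_eq_pair V H
  have memA : ∀ {b a}, b ∈ B → H.Adj b a → a ∈ A := hbip.symm.mem_right_of_adj
  have memB : ∀ {a b}, a ∈ A → H.Adj a b → b ∈ B := hbip.mem_right_of_adj
  have hb₀ := memB ha₀ (adj hN₀).1
  have hb₁ := memB ha₀ (adj hN₀).2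
  have hb₂ := memB (memA hb₁ (adj hN₁).1.symm) (adj hN₁).2
  have hb₃ := memB (memA hb₂ (adj hN₂).1.symm) (adj hN₂).2
  have hb₄ := memB (memA hb₃ (adj hN₃).1.symm) (adj hN₃).2
  have hM₁ := neighborSet_eq_pair (hH b₁) (adj hN₀).2.symm (adj hN₁).1.symm ha₀₁
  have hM₂ := neighborSet_eq_pair (hH b₂) (adj hN₁).2.symm (adj hN₂).1.symm ha₁₂
  have hM₃ := neighborSet_eq_pair (hH b₃) (adj hN₂).2.symm (adj hN₃).1.symm ha₂₃
  obtain ⟨a₄, ha₄, ha₄', hN₄⟩ := hbip.exists_neighborSet_eq_sdiff_of_closed hH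
    (SA := {a₀, a₁, a₂, a₃}) (SB := {b₁, b₂, b₃})
    (by rw [Set.ncard_insert_of_notMem (by simp [ha₀₁, ha₀₂, ha₀₃]),
          Set.ncard_eq_three.mpr ⟨_, _, _, ha₁₂, ha₁₃, ha₂₃, rfl⟩, hA]; norm_num)
    (by rintro b (rfl | rfl | rfl) <;> simp [hM₁, hM₂, hM₃, Set.insert_subset_iff])
    (by rw [ncard_sdiff_triple hb₁ hb₂ hb₃ hb₁₂ hb₁₃ hb₂₃, hB])
  have hadj₄ : ∀ b ∈ B, b ≠ b₁ → b ≠ b₂ → b ≠ b₃ → H.Adj a₄ b := fun b hb h₁ h₂ h₃ => by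
    rw [← mem_neighborSet, hN₄]
    simp [hb, h₁, h₂, h₃]
  simp only [Set.mem_insert_iff, Set.mem_singleton_iff, not_or] at ha₄'
  have hb₀₄ : b₀ ≠ b₄ := by
    rintro rfl
    have hM₀ := neighborSet_eq_pair (hH b₀) (adj hN₀).1.symm (adj hN₃).2.symm ha₀₃
    exact (eq_or_eq_of_neighborSet_eq_pair hM₀ (hadj₄ b₀ hb₀ hb₀₁ hb₀₂ hb₀₃).symm).elim
      ha₄'.1 ha₄'.2.2.2
  have hN₄' := neighborSet_eq_pair (hH a₄)
    (hadj₄ b₄ hb₄ (Ne.symm hb₁₄) (Ne.symm hb₂₄) (Ne.symm hb₃₄)) (hadj₄ b₀ hb₀ hb₀₁ hb₀₂ hb₀₃)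
    (Ne.symm hb₀₄)
  refine ⟨![a₀, a₁, a₂, a₃, a₄], ![b₀, b₁, b₂, b₃, b₄], hbip.isLabelling_of_neighborSet_eq
    (injective_of_nodup_five (by simp [*, Ne.symm]))
    (injective_of_nodup_five (by simp [*, Ne.symm])) ha₀ ?_⟩
  simp [Fin.forall_fin_succ, hN₀, hN₁, hN₂, hN₃, hN₄']

/-- Follow the cycle of `H` through some `a₀ ∈ A`; it closes up after two, three or five vertices
on each side. -/
theorem IsBipartition.exists_fourCycleComponent_or_isLabelling (hbip : IsBipartition H A B)
    (hA : A.ncard = 5) (hB : B.ncard = 5) (hH : ∀ v, mdeg H v = 2) :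
    (∃ a₀ a₁ b₀ b₁, IsFourCycleComponent H A B a₀ a₁ b₀ b₁) ∨
      ∃ a b : Fin 5 → V, IsLabelling H A B (fun i => i) (· + 1) a b := by
  have adj := @adj_of_neighborSet_eq_pair V H
  obtain ⟨a₀, ha₀⟩ : A.Nonempty := Set.nonempty_of_ncard_ne_zero (by omega)
  obtain ⟨b₀, b₁, hb₀₁, hN₀⟩ := Set.ncard_eq_two.mp (hH a₀)
  obtain ⟨a₁, ha₀₁, hM₁⟩ := exists_neighborSet_eq_pair (hH b₁) (adj hN₀).2.symm
  obtain ⟨b₂, hb₁₂, hN₁⟩ := exists_neighborSet_eq_pair (hH a₁) (adj hM₁).2.symm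
  by_cases hb₀₂ : b₀ = b₂
  · subst hb₀₂
    have ha₁ := hbip.symm.mem_right_of_adj (hbip.mem_right_of_adj ha₀ (adj hN₀).2) (adj hM₁).2
    exact .inl ⟨a₀, a₁, b₀, b₁, ha₀, ha₁, hbip.mem_right_of_adj ha₀ (adj hN₀).1,
      hbip.mem_right_of_adj ha₀ (adj hN₀).2, ha₀₁, hb₀₁, hN₀, hN₁.trans (Set.pair_comm _ _),
      neighborSet_eq_pair (hH b₀) (adj hN₀).1.symm (adj hN₁).2.symm ha₀₁, hM₁⟩
  obtain ⟨a₂, ha₁₂, hM₂⟩ := exists_neighborSet_eq_pair (hH b₂) (adj hN₁).2.symm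
  have ha₀₂ := (ne_of_neighborSet_eq_pair hN₀ (adj hM₂).2.symm (Ne.symm hb₀₂) hb₁₂.symm).symm
  obtain ⟨b₃, hb₂₃, hN₂⟩ := exists_neighborSet_eq_pair (hH a₂) (adj hM₂).2.symm
  have hb₁₃ := (ne_of_neighborSet_eq_pair hM₁ (adj hN₂).2.symm ha₀₂.symm ha₁₂.symm).symm
  by_cases hb₀₃ : b₀ = b₃
  · subst hb₀₃
    exact .inl (hbip.exists_fourCycleComponent_of_sixCycle hA hB hH ha₀ (by simp [*])
      (by simp [*]) hN₀ hN₁ hN₂)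
  obtain ⟨a₃, ha₂₃, hM₃⟩ := exists_neighborSet_eq_pair (hH b₃) (adj hN₂).2.symm
  have ha₀₃ := (ne_of_neighborSet_eq_pair hN₀ (adj hM₃).2.symm (Ne.symm hb₀₃) hb₁₃.symm).symm
  have ha₁₃ := (ne_of_neighborSet_eq_pair hN₁ (adj hM₃).2.symm hb₁₃.symm hb₂₃.symm).symm
  obtain ⟨b₄, hb₃₄, hN₃⟩ := exists_neighborSet_eq_pair (hH a₃) (adj hM₃).2.symm
  have hb₁₄ := (ne_of_neighborSet_eq_pair hM₁ (adj hN₃).2.symm ha₀₃.symm ha₁₃.symm).symm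
  have hb₂₄ := (ne_of_neighborSet_eq_pair hM₂ (adj hN₃).2.symm ha₁₃.symm ha₂₃.symm).symm
  exact .inr (hbip.exists_isLabelling_of_path hA hB hH ha₀ (by simp [*]) (by simp [*])
    (by simp [*]) hN₀ hN₁ hN₂ hN₃)

end Trace

section TenVertices

variable {V : Type*} [Fintype V] {G : SimpleGraph V} {A B : Set V} {a b : Fin 5 → V}

theorem IsLabelling.nonempty_iso_Qgraph
    (hL : IsLabelling (bipComplement G A B) A B qNeighbor₁ qNeighbor₂ a b)
    (hbip : IsBipartition G A B) (hcard : Fintype.card V = 10) : Nonempty (G ≃g Qgraph 5) := by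
  refine (hbip.nonempty_iso_of_labelling (by simp [hcard]) hL.injective_left hL.injective_right
    hL.mem_left hL.mem_right (by simp [Qgraph]) (by simp [Qgraph]) fun i j => ?_).map Iso.symm
  rw [hL.adj_iff_of_bipComplement hbip]
  revert i j
  simp only [Qgraph, fromRel_adj, ne_eq, reduceCtorEq, not_false_eq_true, true_and, or_false]
  decide

/-- `inl i ↦ 4 i` and `inr j ↦ 4 j + 3` send the labelled pattern onto `M₁₀`: its bipartite
complement joins `x` to `x ± 3`. -/
noncomputable def mobiusLabelling : Fin 5 ⊕ Fin 5 ≃ ZMod (2 * 5) :=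
  Equiv.ofBijective (Sum.elim ![0, 4, 8, 2, 6] ![3, 7, 1, 5, 9]) (by decide)

noncomputable def cycleLabelling : Fin 5 ⊕ Fin 5 ≃ Fin 10 :=
  Equiv.ofBijective (Sum.elim ![0, 2, 4, 6, 8] ![9, 1, 3, 5, 7]) (by decide)

theorem IsLabelling.nonempty_iso_mobiusLadder
    (hL : IsLabelling (bipComplement G A B) A B (fun i => i) (· + 1) a b)
    (hbip : IsBipartition G A B) (hcard : Fintype.card V = 10) :
    Nonempty (G ≃g mobiusLadder 5) := by
  obtain ⟨e⟩ := hbip.nonempty_iso_of_labelling (K := (mobiusLadder 5).comap mobiusLabelling)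
    (by simp [hcard]) hL.injective_left hL.injective_right hL.mem_left hL.mem_right
    (by simp only [comap_adj, mobiusLadder, fromRel_adj, mobiusLabelling, Equiv.ofBijective_apply]
        decide)
    (by simp only [comap_adj, mobiusLadder, fromRel_adj, mobiusLabelling, Equiv.ofBijective_apply]
        decide)
    fun i j => by
      rw [hL.adj_iff_of_bipComplement hbip]
      revert i j
      simp only [comap_adj, mobiusLadder, fromRel_adj, mobiusLabelling, Equiv.ofBijective_apply]
      decide
  exact ⟨e.symm.trans (Iso.comap _ _)⟩

theorem IsLabelling.connected {H : SimpleGraph V}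
    (hL : IsLabelling H A B (fun i => i) (· + 1) a b) (hbip : IsBipartition H A B)
    (hcard : Fintype.card V = 10) : H.Connected := by
  obtain ⟨e⟩ := hbip.nonempty_iso_of_labelling
    (K := (SimpleGraph.cycleGraph 10).comap cycleLabelling)
    (by simp [hcard]) hL.injective_left hL.injective_right hL.mem_left hL.mem_right
    (by simp only [comap_adj, cycleGraph_adj, cycleLabelling, Equiv.ofBijective_apply]; decide)
    (by simp only [comap_adj, cycleGraph_adj, cycleLabelling, Equiv.ofBijective_apply]; decide)
    fun i j => by
      rw [hL.adj_iff]
      revert i j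
      simp only [comap_adj, cycleGraph_adj, cycleLabelling, Equiv.ofBijective_apply]
      decide
  exact (Iso.connected_iff (e.symm.trans (Iso.comap _ _))).mpr cycleGraph_connected

end TenVertices

/-- The only simple cubic bipartite graphs of order ten are `M₁₀` and
`Q₁₀`: such a graph is isomorphic to `Q₁₀` if its bipartite complement is disconnected,
and isomorphic to `M₁₀` if its bipartite complement is connected. -/
theorem statement9 {V : Type*} [Fintype V] (G : SimpleGraph V) (A B : Set V)
    (hbip : IsBipartition G A B) (hcard : Fintype.card V = 10)
    (hcubic : ∀ v : V, mdeg G v = 3) :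
    (¬ (bipComplement G A B).Connected → Nonempty (G ≃g Qgraph 5)) ∧
    ((bipComplement G A B).Connected → Nonempty (G ≃g mobiusLadder 5)) := by
  have hsum := hbip.ncard_add_ncard
  have hAB := hbip.ncard_eq_ncard_of_regular hcubic (by norm_num)
  rw [Nat.card_eq_fintype_card, hcard] at hsum
  have hA : A.ncard = 5 := by omega
  have hB : B.ncard = 5 := by omega
  have hH : ∀ v, mdeg (bipComplement G A B) v = 2 := by
    intro v
    rcases (hbip.1.symm ▸ Set.mem_univ v : v ∈ A ∪ B) with hv | hv
    · rw [hbip.mdeg_bipComplement hv, hB, hcubic]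
    · rw [bipComplement_comm, hbip.symm.mdeg_bipComplement hv, hA, hcubic]
  have hHbip := isBipartition_bipComplement hbip
  rcases hHbip.exists_fourCycleComponent_or_isLabelling hA hB hH with
    ⟨a₀, a₁, b₀, b₁, hC⟩ | ⟨a, b, hL⟩
  · obtain ⟨a, b, hL⟩ := hC.exists_isLabelling hHbip hA hB hH
    exact ⟨fun _ => hL.nonempty_iso_Qgraph hbip hcard,
      fun h => absurd h (hC.not_connected hHbip (by omega))⟩
  · exact ⟨fun h => absurd (hL.connected hHbip hcard) h,
      fun _ => hL.nonempty_iso_mobiusLadder hbip hcard⟩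

end MinimalBraces
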